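/- arXiv:0911.5211 — 4 statements merged into one kernel-verified Lean document; each statement's English description precedes it below -/
import Mathlib

section
/- Let a and b be positive integers with gcd(a,b) = 1. Let (x,y,z) and (x',y',z') be triples of complex numbers with x ≠ 0, z ≠ 0, x' ≠ 0 and z' ≠ 0. If the ℂ-linear span in ℂ⁴ of the two vectors (x^a, y^a, z^a, x^a) and (z^b, x^b, y^b, 0) equals the ℂ-linear span in ℂ⁴ of the two vectors (x'^a, y'^a, z'^a, x'^a) and (z'^b, x'^b, y'^b, 0), then there exists a nonzero λ ∈ ℂ with (x', y', z') = (λ·x, λ·y, λ·z). -/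
/-!
Comparing fourth coordinates (the only place where the second row vanishes) and first minus
fourth coordinates shows that equal spans force each primed row to be a multiple of the
corresponding unprimed row. With `t = x' / x`, the first row then gives `w' ^ a = (t * w) ^ a`
and the second `w' ^ b = (t * w) ^ b` for `w = y, z`, and coprimality of `a` and `b` leaves
`w' = t * w`.
-/

theorem eq_of_pow_eq_pow_of_coprime {K : Type*} [CommGroupWithZero K] {u v : K} {m n : ℕ}
    (hmn : m.Coprime n) (hm : u ^ m = v ^ m) (hn : u ^ n = v ^ n) : u = v := by
  rcases eq_or_ne v 0 with rfl | hv
  · rcases Nat.eq_zero_or_pos m with rfl | hm0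
    · simp_all [Nat.coprime_zero_left]
    · exact (pow_eq_zero_iff hm0.ne').mp (hm.trans (zero_pow hm0.ne'))
  · have hpow (k : ℕ) (hk : u ^ k = v ^ k) : (u / v) ^ k = 1 := by
      rw [div_pow, hk, div_self (pow_ne_zero _ hv)]
    exact (div_eq_one_iff_eq hv).mp
      ((pow_eq_one_iff_of_coprime hmn).mp ⟨hpow m hm, hpow n hn⟩)

section Rows

variable {R : Type*} [Ring R] [NoZeroDivisors R]

theorem exists_eq_smul_fst_of_mem_span_pair {p q r s u v p' q' r' : R} (hs : s ≠ 0)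
    (h : ![p', q', r', p'] ∈ Submodule.span R {![p, q, r, p], ![s, u, v, 0]}) :
    ∃ c : R, ![p', q', r', p'] = c • ![p, q, r, p] := by
  obtain ⟨c, d, hcd⟩ := Submodule.mem_span_pair.mp h
  have h0 := congrFun hcd 0
  have h3 := congrFun hcd 3
  simp only [Pi.add_apply, Pi.smul_apply, Matrix.cons_val, smul_eq_mul, mul_zero,
    add_zero] at h0 h3
  have hd : d = 0 := by
    refine (mul_eq_zero.mp ?_).resolve_right hs
    rw [h3] at h0
    simpa using h0
  exact ⟨c, by simpa [hd] using hcd.symm⟩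

theorem exists_eq_smul_snd_of_mem_span_pair {p q r s u v s' u' v' : R} (hp : p ≠ 0)
    (h : ![s', u', v', 0] ∈ Submodule.span R {![p, q, r, p], ![s, u, v, 0]}) :
    ∃ f : R, ![s', u', v', 0] = f • ![s, u, v, 0] := by
  obtain ⟨e, f, hef⟩ := Submodule.mem_span_pair.mp h
  have h3 := congrFun hef 3
  simp only [Pi.add_apply, Pi.smul_apply, Matrix.cons_val, smul_eq_mul, mul_zero,
    add_zero] at h3
  have he : e = 0 := (mul_eq_zero.mp h3).resolve_right hp
  exact ⟨f, by simpa [he] using hef.symm⟩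

end Rows

theorem eq_div_mul_of_pow_eq_smul {K : Type*} [Field K] {a b : ℕ} (hab : a.Coprime b)
    {x w x' w' c f : K} (hx : x ≠ 0) (hxa : x' ^ a = c * x ^ a) (hwa : w' ^ a = c * w ^ a)
    (hxb : x' ^ b = f * x ^ b) (hwb : w' ^ b = f * w ^ b) : w' = x' / x * w := by
  have hc : c = (x' / x) ^ a := by rw [div_pow, hxa, mul_div_cancel_right₀ _ (pow_ne_zero _ hx)]
  have hf : f = (x' / x) ^ b := by rw [div_pow, hxb, mul_div_cancel_right₀ _ (pow_ne_zero _ hx)]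
  exact eq_of_pow_eq_pow_of_coprime hab (by rw [hwa, hc, mul_pow]) (by rw [hwb, hf, mul_pow])

theorem stmt_0_general (a b : ℕ) (hab : Nat.gcd a b = 1)
    (x y z x' y' z' : ℂ) (hx : x ≠ 0) (hz : z ≠ 0) (hx' : x' ≠ 0)
    (h : Submodule.span ℂ ({![x ^ a, y ^ a, z ^ a, x ^ a], ![z ^ b, x ^ b, y ^ b, 0]} :
            Set (Fin 4 → ℂ)) =
         Submodule.span ℂ ({![x' ^ a, y' ^ a, z' ^ a, x' ^ a], ![z' ^ b, x' ^ b, y' ^ b, 0]} :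
            Set (Fin 4 → ℂ))) :
    ∃ l : ℂ, l ≠ 0 ∧ x' = l * x ∧ y' = l * y ∧ z' = l * z := by
  obtain ⟨c, hc⟩ := exists_eq_smul_fst_of_mem_span_pair (pow_ne_zero b hz)
    (h.ge (Submodule.subset_span (Set.mem_insert _ _)))
  obtain ⟨f, hf⟩ := exists_eq_smul_snd_of_mem_span_pair (pow_ne_zero a hx)
    (h.ge (Submodule.subset_span (Set.mem_insert_of_mem _ rfl)))
  refine ⟨x' / x, div_ne_zero hx' hx, (div_mul_cancel₀ x' hx).symm, ?_, ?_⟩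
  · exact eq_div_mul_of_pow_eq_smul hab hx (congrFun hc 0) (congrFun hc 1)
      (congrFun hf 1) (congrFun hf 2)
  · exact eq_div_mul_of_pow_eq_smul hab hx (congrFun hc 0) (congrFun hc 2)
      (congrFun hf 1) (congrFun hf 0)

/-- Proposition 3.12 (injectivity on the open set {x ≠ 0, z ≠ 0}): for coprime
positive integers `a`, `b`, if the spans of the two rows of the matrices at
`(x,y,z)` and `(x',y',z')` coincide, then the triples are proportional. -/
theorem stmt_0 (a b : ℕ) (ha : 0 < a) (hb : 0 < b) (hab : Nat.gcd a b = 1)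
    (x y z x' y' z' : ℂ) (hx : x ≠ 0) (hz : z ≠ 0) (hx' : x' ≠ 0) (hz' : z' ≠ 0)
    (h : Submodule.span ℂ ({![x ^ a, y ^ a, z ^ a, x ^ a], ![z ^ b, x ^ b, y ^ b, 0]} :
            Set (Fin 4 → ℂ)) =
         Submodule.span ℂ ({![x' ^ a, y' ^ a, z' ^ a, x' ^ a], ![z' ^ b, x' ^ b, y' ^ b, 0]} :
            Set (Fin 4 → ℂ))) :
    ∃ l : ℂ, l ≠ 0 ∧ x' = l * x ∧ y' = l * y ∧ z' = l * z :=
  stmt_0_general a b hab x y z x' y' z' hx hz hx' h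
end

section
/- Let n ≥ 1 be an integer and let (x,y,z) and (x',y',z') be nonzero triples of complex numbers. If the ℂ-linear span in ℂ⁴ of the two vectors (x, y, z, x) and (z^n, x^n, y^n, 0) equals the ℂ-linear span in ℂ⁴ of the two vectors (x', y', z', x') and (z'^n, x'^n, y'^n, 0), then there exists a nonzero λ ∈ ℂ with (x', y', z') = (λ·x, λ·y, λ·z). -/
/-!
Write `v = (x, y, z, x)`, `w = (zⁿ, xⁿ, yⁿ, 0)` and similarly `v', w'`. Equality of the spans gives
`v' = a v + b w` and `v = a' v' + b' w'`. Comparing first and last coordinates, `b zⁿ = 0` and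
`b' z'ⁿ = 0`. If `b = 0` (or `b' = 0`) the two points are proportional. If both were nonzero, then
`z = z' = 0`, the third coordinates force `y = y' = 0`, and the second coordinates force `x = 0`.
-/

variable {K : Type*} [Field K]

abbrev grRow₁ (x y z : K) : Fin 4 → K := ![x, y, z, x]

abbrev grRow₂ (n : ℕ) (x y z : K) : Fin 4 → K := ![z ^ n, x ^ n, y ^ n, 0]

theorem grRow₁_eq_combination_iff {n : ℕ} {a b x y z x' y' z' : K} :
    a • grRow₁ x y z + b • grRow₂ n x y z = grRow₁ x' y' z' ↔
      x' = a * x ∧ y' = a * y + b * x ^ n ∧ z' = a * z + b * y ^ n ∧ b * z ^ n = 0 := by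
  constructor
  · intro h
    have h₀ := congrFun h 0
    have h₁ := congrFun h 1
    have h₂ := congrFun h 2
    have h₃ := congrFun h 3
    simp only [Pi.add_apply, Pi.smul_apply, smul_eq_mul, Matrix.cons_val] at h₀ h₁ h₂ h₃
    refine ⟨by linear_combination -h₃, by linear_combination -h₁, by linear_combination -h₂,
      by linear_combination h₀ - h₃⟩
  · rintro ⟨rfl, rfl, rfl, hb⟩
    ext i
    fin_cases i <;> simp [hb]

theorem eq_zero_or_eq_zero_of_combinations_eq_grRow₁ {n : ℕ} (hn : n ≠ 0) {a b a' b' x y z x' y' z' : K}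
    (hxyz : (x, y, z) ≠ (0, 0, 0))
    (h : a • grRow₁ x y z + b • grRow₂ n x y z = grRow₁ x' y' z')
    (h' : a' • grRow₁ x' y' z' + b' • grRow₂ n x' y' z' = grRow₁ x y z) :
    b = 0 ∨ b' = 0 := by
  rw [grRow₁_eq_combination_iff] at h h'
  obtain ⟨-, hy', hz', hbz⟩ := h
  obtain ⟨-, -, hz, hbz'⟩ := h'
  by_contra! hbb'
  obtain ⟨hb, hb'⟩ := hbb'
  have hz0 : z = 0 := by simpa [hb, hn] using hbz
  have hz'0 : z' = 0 := by simpa [hb', hn] using hbz'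
  have hy0 : y = 0 := by simpa [hz0, hz'0, hb, hn] using hz'
  have hy'0 : y' = 0 := by simpa [hz0, hz'0, hb', hn] using hz
  have hx0 : x = 0 := by simpa [hy0, hy'0, hb, hn] using hy'
  exact hxyz (by simp [hx0, hy0, hz0])

theorem ne_zero_of_triple_eq_mul {a x y z x' y' z' : K} (hxyz' : (x', y', z') ≠ (0, 0, 0))
    (hx : x' = a * x) (hy : y' = a * y) (hz : z' = a * z) : a ≠ 0 := by
  rintro rfl
  exact hxyz' (by simp [hx, hy, hz])

/-- Remark 3.13: for `n ≥ 1`, the morphism `f_n : ℙ² → Gr(2, ℂ⁴)` given by the matrix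
with rows `(x, y, z, x)` and `(zⁿ, xⁿ, yⁿ, 0)` is one to one onto its image. -/
theorem stmt_1 (n : ℕ) (hn : 1 ≤ n)
    (x y z x' y' z' : ℂ) (hxyz : (x, y, z) ≠ (0, 0, 0)) (hxyz' : (x', y', z') ≠ (0, 0, 0))
    (h : Submodule.span ℂ ({![x, y, z, x], ![z ^ n, x ^ n, y ^ n, 0]} : Set (Fin 4 → ℂ)) =
         Submodule.span ℂ ({![x', y', z', x'], ![z' ^ n, x' ^ n, y' ^ n, 0]} :
            Set (Fin 4 → ℂ))) :
    ∃ l : ℂ, l ≠ 0 ∧ x' = l * x ∧ y' = l * y ∧ z' = l * z := by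
  have hv' : grRow₁ x' y' z' ∈ Submodule.span ℂ {grRow₁ x y z, grRow₂ n x y z} := by
    rw [h]; exact Submodule.subset_span (Set.mem_insert _ _)
  have hv : grRow₁ x y z ∈ Submodule.span ℂ {grRow₁ x' y' z', grRow₂ n x' y' z'} := by
    rw [← h]; exact Submodule.subset_span (Set.mem_insert _ _)
  obtain ⟨a, b, hab⟩ := Submodule.mem_span_pair.1 hv'
  obtain ⟨a', b', hab'⟩ := Submodule.mem_span_pair.1 hv
  rcases eq_zero_or_eq_zero_of_combinations_eq_grRow₁ (by omega) hxyz hab hab' with rfl | rfl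
  · obtain ⟨hx, hy, hz, -⟩ := grRow₁_eq_combination_iff.1 hab
    simp only [zero_mul, add_zero] at hy hz
    exact ⟨a, ne_zero_of_triple_eq_mul hxyz' hx hy hz, hx, hy, hz⟩
  · obtain ⟨hx, hy, hz, -⟩ := grRow₁_eq_combination_iff.1 hab'
    simp only [zero_mul, add_zero] at hy hz
    have ha' := ne_zero_of_triple_eq_mul hxyz hx hy hz
    exact ⟨a'⁻¹, inv_ne_zero ha', by rw [hx, inv_mul_cancel_left₀ ha'],
      by rw [hy, inv_mul_cancel_left₀ ha'], by rw [hz, inv_mul_cancel_left₀ ha']⟩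
end

section
/- Let a and b be positive integers. For every triple (x,y,z) of complex numbers with (x,y,z) ≠ (0,0,0), the four vectors (x^a, z^b), (y^a, x^b), (z^a, y^b), (x^a, 0) span ℂ² as a ℂ-vector space. -/
/-! Two vectors of `K²` with nonzero determinant span it. Write `s₁, …, s₄` for the four
vectors: if `x ≠ 0` the pair `(s₂, s₄)` has determinant `-x^(a+b)`; if `x = 0 ≠ z` the pair
`(s₁, s₃)` has determinant `-z^(a+b)`; if `x = z = 0` the pair `(s₂, s₃)` has determinant
`y^(a+b)`. -/

theorem Submodule.eq_top_of_det_fin_two_ne_zero {K : Type*} [Field K]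
    {S : Submodule K (Fin 2 → K)} {u v : Fin 2 → K} (hu : u ∈ S) (hv : v ∈ S)
    (hdet : u 0 * v 1 - u 1 * v 0 ≠ 0) : S = ⊤ := by
  have hli : LinearIndependent K ![u, v] :=
    Matrix.linearIndependent_rows_of_det_ne_zero (A := Matrix.of ![u, v])
      (by rwa [Matrix.det_fin_two])
  rw [eq_top_iff, ← hli.span_eq_top_of_card_eq_finrank' (by simp), Submodule.span_le,
    Matrix.range_cons_cons_empty]
  exact Set.insert_subset hu (Set.singleton_subset_iff.mpr hv)

theorem stmt_2_general (a b : ℕ) (ha : 0 < a)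
    (x y z : ℂ) (hxyz : (x, y, z) ≠ (0, 0, 0)) :
    Submodule.span ℂ ({![x ^ a, z ^ b], ![y ^ a, x ^ b], ![z ^ a, y ^ b], ![x ^ a, 0]} :
        Set (Fin 2 → ℂ)) = ⊤ := by
  set S := Submodule.span ℂ ({![x ^ a, z ^ b], ![y ^ a, x ^ b], ![z ^ a, y ^ b], ![x ^ a, 0]} :
    Set (Fin 2 → ℂ))
  have hs₁ : ![x ^ a, z ^ b] ∈ S := Submodule.subset_span (by simp)
  have hs₂ : ![y ^ a, x ^ b] ∈ S := Submodule.subset_span (by simp)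
  have hs₃ : ![z ^ a, y ^ b] ∈ S := Submodule.subset_span (by simp)
  have hs₄ : ![x ^ a, 0] ∈ S := Submodule.subset_span (by simp)
  rcases eq_or_ne x 0 with rfl | hx
  · rcases eq_or_ne z 0 with rfl | hz
    · have hy : y ≠ 0 := by rintro rfl; exact hxyz rfl
      refine Submodule.eq_top_of_det_fin_two_ne_zero hs₂ hs₃ ?_
      simp [zero_pow ha.ne', hy]
    · refine Submodule.eq_top_of_det_fin_two_ne_zero hs₁ hs₃ ?_
      simp [zero_pow ha.ne', hz]
  · refine Submodule.eq_top_of_det_fin_two_ne_zero hs₂ hs₄ ?_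
    simp [hx]

/-- Example 2.6: for positive integers `a`, `b` and any nonzero `(x,y,z) ∈ ℂ³`, the four
vectors `(xᵃ, zᵇ)`, `(yᵃ, xᵇ)`, `(zᵃ, yᵇ)`, `(xᵃ, 0)` span `ℂ²`. -/
theorem stmt_2 (a b : ℕ) (ha : 0 < a) (hb : 0 < b)
    (x y z : ℂ) (hxyz : (x, y, z) ≠ (0, 0, 0)) :
    Submodule.span ℂ ({![x ^ a, z ^ b], ![y ^ a, x ^ b], ![z ^ a, y ^ b], ![x ^ a, 0]} :
        Set (Fin 2 → ℂ)) = ⊤ :=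
  stmt_2_general a b ha x y z hxyz
end

section
/- Let c ≥ 3 be an integer and let S be a finite set of nonzero vectors in ℂ³ that are pairwise non-proportional (i.e., no element of S is a complex scalar multiple of another), with the cardinality of S at most c − 2. Then the ℂ-linear map which sends a homogeneous polynomial F of degree c − 3 in ℂ[X,Y,Z] to the function S → ℂ, p ↦ F(p) (evaluation of F at the coordinates of p), is surjective onto the space of all functions from S to ℂ. -/
/-!
For each point `p` of `S`, multiply together one linear form per other point `q` of `S`,
vanishing at `q` but not at `p` (possible as `p` and `q` are not proportional), and pad with
a power of a coordinate that is nonzero at `p`. Since `|S| - 1 ≤ c - 3`, this gives a form of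
degree `c - 3` that is nonzero at `p` and vanishes on the rest of `S`; these forms are a
Lagrange basis for the functions `S → ℂ`.
-/

open MvPolynomial

namespace MvPolynomial

variable {σ K : Type*} [Field K]

theorem exists_isHomogeneous_one_eval_eq_zero_eval_ne_zero [Fintype σ] {p q : σ → K}
    (hpq : p ∉ K ∙ q) :
    ∃ L : MvPolynomial σ K, L.IsHomogeneous 1 ∧ eval q L = 0 ∧ eval p L ≠ 0 := by
  classical
  obtain ⟨f, hfp, hfq⟩ := Submodule.exists_dual_map_eq_bot_of_notMem hpq inferInstance
  have hf_eval (w : σ → K) : eval w (∑ i, C (f (Pi.single i 1)) * X i) = f w := by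
    conv_rhs => rw [pi_eq_sum_univ' w]
    simp [mul_comm]
  have hfq : f q = 0 := by
    rwa [Submodule.map_span, Set.image_singleton, Submodule.span_singleton_eq_bot] at hfq
  refine ⟨∑ i, C (f (Pi.single i 1)) * X i, ?_, ?_, ?_⟩
  · exact IsHomogeneous.sum _ _ _ fun i _ => (isHomogeneous_X K i).C_mul _
  · rw [hf_eval, hfq]
  · rwa [hf_eval]

theorem exists_isHomogeneous_eval_ne_zero_eval_eq_zero [Fintype σ] {p : σ → K} (hp : p ≠ 0)
    (T : Finset (σ → K)) (hT : ∀ q ∈ T, p ∉ K ∙ q) {d : ℕ} (hd : T.card ≤ d) :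
    ∃ B : MvPolynomial σ K, B.IsHomogeneous d ∧ eval p B ≠ 0 ∧ ∀ q ∈ T, eval q B = 0 := by
  classical
  induction T using Finset.induction_on generalizing d with
  | empty =>
    obtain ⟨i, hi⟩ := Function.ne_iff.mp hp
    exact ⟨X i ^ d, isHomogeneous_X_pow i d, by simpa using pow_ne_zero d hi, by simp⟩
  | insert q T hqT ih =>
    rw [Finset.card_insert_of_notMem hqT] at hd
    obtain ⟨d, rfl⟩ : ∃ d', d = d' + 1 := Nat.exists_eq_add_one.mpr (by omega)
    obtain ⟨B, hB, hBp, hBT⟩ :=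
      ih (fun r hr => hT r (Finset.mem_insert_of_mem hr)) (Nat.le_of_succ_le_succ hd)
    obtain ⟨L, hL, hLq, hLp⟩ :=
      exists_isHomogeneous_one_eval_eq_zero_eval_ne_zero (hT q (Finset.mem_insert_self q T))
    refine ⟨B * L, hB.mul hL, by simpa using mul_ne_zero hBp hLp, ?_⟩
    rintro r hr
    rcases Finset.mem_insert.mp hr with rfl | hr
    · simp [hLq]
    · simp [hBT r hr]

theorem exists_mem_homogeneousSubmodule_eval_eq {S : Finset (σ → K)} {d : ℕ}
    (hS : ∀ p ∈ S, ∃ B : MvPolynomial σ K,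
      B.IsHomogeneous d ∧ eval p B ≠ 0 ∧ ∀ q ∈ S, q ≠ p → eval q B = 0)
    (g : S → K) : ∃ F ∈ homogeneousSubmodule σ K d, ∀ p : S, eval (p : σ → K) F = g p := by
  choose! B hB hBp hBS using hS
  refine ⟨∑ p : S, C (g p / eval p.1 (B p)) * B p, ?_, fun r => ?_⟩
  · exact IsHomogeneous.sum _ _ _ fun p _ => (hB p p.2).C_mul _
  · rw [map_sum, Finset.sum_eq_single r]
    · rw [map_mul, eval_C, div_mul_cancel₀ _ (hBp r r.2)]
    · intro p _ hpr
      rw [map_mul, hBS p p.2 r r.2 (Subtype.coe_ne_coe.mpr hpr.symm), mul_zero]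
    · simp

end MvPolynomial

theorem stmt_6_general (c : ℕ) (S : Finset (Fin 3 → ℂ))
    (hS0 : ∀ p ∈ S, p ≠ 0)
    (hSprop : ∀ p ∈ S, ∀ q ∈ S, p ≠ q → ∀ l : ℂ, q ≠ l • p)
    (hcard : S.card ≤ c - 2) :
    ∀ g : S → ℂ, ∃ F : MvPolynomial (Fin 3) ℂ,
      F ∈ homogeneousSubmodule (Fin 3) ℂ (c - 3) ∧ ∀ p : S, eval (p : Fin 3 → ℂ) F = g p := by
  refine exists_mem_homogeneousSubmodule_eval_eq fun p hp => ?_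
  have hindep : ∀ q ∈ S.erase p, p ∉ ℂ ∙ q := fun q hq hpq => by
    obtain ⟨l, hl⟩ := Submodule.mem_span_singleton.mp hpq
    exact hSprop q (Finset.mem_of_mem_erase hq) p hp (Finset.ne_of_mem_erase hq) l hl.symm
  obtain ⟨B, hB, hBp, hBS⟩ := exists_isHomogeneous_eval_ne_zero_eval_eq_zero (hS0 p hp)
    (S.erase p) hindep (d := c - 3) (by rw [Finset.card_erase_of_mem hp]; omega)
  exact ⟨B, hB, hBp, fun q hq hqp => hBS q (Finset.mem_erase.mpr ⟨hqp, hq⟩)⟩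

/-- The key claim in the proof of Theorem 3.7: for a set `S` of at most `c − 2` pairwise
non-proportional nonzero points of `ℂ³`, evaluation of homogeneous polynomials of degree
`c − 3` at the points of `S` is surjective onto the functions `S → ℂ`. -/
theorem stmt_6 (c : ℕ) (hc : 3 ≤ c) (S : Finset (Fin 3 → ℂ))
    (hS0 : ∀ p ∈ S, p ≠ 0)
    (hSprop : ∀ p ∈ S, ∀ q ∈ S, p ≠ q → ∀ l : ℂ, q ≠ l • p)
    (hcard : S.card ≤ c - 2) :
    ∀ g : S → ℂ, ∃ F : MvPolynomial (Fin 3) ℂ,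
      F ∈ homogeneousSubmodule (Fin 3) ℂ (c - 3) ∧ ∀ p : S, eval (p : Fin 3 → ℂ) F = g p :=
  stmt_6_general c S hS0 hSprop hcard
end
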